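/- Let G be a finite simple graph with at least one edge and maximum degree Δ. Then for every vertex v_i of degree d_i, E_G(v_i) ≥ √(d_i/Δ). -/

import Mathlib

/-!
Let `A` be the adjacency matrix, `B = |A|`, `e` the `i`-th unit vector and `x = A e`, so that
`eᵀ A x = xᵀ x = (A²)ᵢᵢ = dᵢ`. Since `B ± A ⪰ 0`, a discriminant argument gives
`dᵢ² ≤ Bᵢᵢ · xᵀ B x`, and Cauchy–Schwarz together with `B² = A²` gives
`(xᵀ B x)² ≤ xᵀ x · (A⁴)ᵢᵢ ≤ dᵢ · dᵢ² Δ`. Hence `dᵢ⁴ ≤ Bᵢᵢ² dᵢ³ Δ`.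
-/

open Matrix Finset

/-- The energy of the vertex `i` of a finite simple graph `G`:
the `(i,i)` entry of `|A| = (A Aᴴ)^{1/2}`, where `A` is the adjacency matrix. -/
noncomputable def vertexEnergy {n : ℕ} (G : SimpleGraph (Fin n)) [DecidableRel G.Adj]
    (i : Fin n) : ℝ :=
  ((Matrix.posSemidef_self_mul_conjTranspose (G.adjMatrix ℝ)).1.eigenvectorUnitary *
    diagonal (Real.sqrt ∘ (Matrix.posSemidef_self_mul_conjTranspose (G.adjMatrix ℝ)).1.eigenvalues) *
    (star (Matrix.posSemidef_self_mul_conjTranspose (G.adjMatrix ℝ)).1.eigenvectorUnitary :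
      Matrix (Fin n) (Fin n) ℝ)) i i

open scoped MatrixOrder

theorem pow_three_le_sq_mul_of_sq_le_mul {t b s w : ℝ} (ht : 0 ≤ t) (hw : 0 ≤ w)
    (h₁ : t ^ 2 ≤ b * s) (h₂ : s ^ 2 ≤ t * w) : t ^ 3 ≤ b ^ 2 * w := by
  rcases ht.eq_or_lt with rfl | ht
  · simpa using mul_nonneg (sq_nonneg b) hw
  · have h₁' : (t ^ 2) ^ 2 ≤ (b * s) ^ 2 := pow_le_pow_left₀ (sq_nonneg t) h₁ 2
    have : t * t ^ 3 ≤ t * (b ^ 2 * w) := by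
      nlinarith [mul_le_mul_of_nonneg_left h₂ (sq_nonneg b)]
    exact le_of_mul_le_mul_left this ht

namespace Matrix

variable {n : Type*} [Fintype n]

theorem sq_dotProduct_le (u v : n → ℝ) : (u ⬝ᵥ v) ^ 2 ≤ (u ⬝ᵥ u) * (v ⬝ᵥ v) := by
  simpa only [dotProduct, sq] using sum_mul_sq_le_sq_mul_sq univ u v

theorem mulVec_dotProduct_mulVec_self (M : Matrix n n ℝ) (v : n → ℝ) :
    M *ᵥ v ⬝ᵥ M *ᵥ v = v ⬝ᵥ (Mᵀ * M) *ᵥ v := by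
  rw [← mulVec_mulVec, dotProduct_transpose_mulVec]

theorem sq_dotProduct_mulVec_le_of_posSemidef_add_sub {A B : Matrix n n ℝ} (hA : Aᵀ = A)
    (hadd : (B + A).PosSemidef) (hsub : (B - A).PosSemidef) (x y : n → ℝ) :
    (x ⬝ᵥ A *ᵥ y) ^ 2 ≤ (x ⬝ᵥ B *ᵥ x) * (y ⬝ᵥ B *ᵥ y) := by
  have hsymm : y ⬝ᵥ A *ᵥ x = x ⬝ᵥ A *ᵥ y := by rw [← dotProduct_transpose_mulVec, hA]
  -- `(t x - y)ᵀ (B + A) (t x - y) + (t x + y)ᵀ (B - A) (t x + y)` is this quadratic, doubled.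
  have hquad : ∀ t : ℝ,
      0 ≤ (x ⬝ᵥ B *ᵥ x) * (t * t) + (-2 * (x ⬝ᵥ A *ᵥ y)) * t + (y ⬝ᵥ B *ᵥ y) := by
    intro t
    have h₁ := hadd.dotProduct_mulVec_nonneg (t • x - y)
    have h₂ := hsub.dotProduct_mulVec_nonneg (t • x + y)
    simp only [star_trivial, add_mulVec, sub_mulVec, mulVec_add, mulVec_sub, mulVec_smul,
      dotProduct_add, dotProduct_sub, add_dotProduct, sub_dotProduct, dotProduct_smul,
      smul_dotProduct, smul_eq_mul, hsymm] at h₁ h₂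
    linarith
  have hdiscrim := discrim_le_zero hquad
  rw [discrim] at hdiscrim
  linarith

theorem PosSemidef.eigenvectorUnitary_mul_diagonal_sqrt_mul_star [DecidableEq n]
    {M : Matrix n n ℝ} (hM : M.PosSemidef) :
    (hM.1.eigenvectorUnitary * diagonal (Real.sqrt ∘ hM.1.eigenvalues) *
      (star hM.1.eigenvectorUnitary : Matrix n n ℝ)) = CFC.sqrt M := by
  rw [CFC.sqrt_eq_cfc, cfc_nnreal_eq_real _ M hM.nonneg, hM.1.cfc_eq]
  simp only [IsHermitian.cfc]
  congr 3
  funext k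
  simp [Real.coe_sqrt, max_eq_left (hM.eigenvalues_nonneg k)]

variable [DecidableEq n] {A : Matrix n n ℝ}

theorem IsHermitian.posSemidef_cfcAbs_add (hA : A.IsHermitian) :
    (CFC.abs A + A).PosSemidef := by
  rw [CFC.abs_add_self A hA.isSelfAdjoint]
  exact (smul_nonneg zero_le_two (CFC.posPart_nonneg A)).posSemidef

theorem IsHermitian.posSemidef_cfcAbs_sub (hA : A.IsHermitian) :
    (CFC.abs A - A).PosSemidef := by
  rw [CFC.abs_sub_self A hA.isSelfAdjoint]
  exact (smul_nonneg zero_le_two (CFC.negPart_nonneg A)).posSemidef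

theorem IsHermitian.dotProduct_sq_mulVec_pow_three_le (hA : A.IsHermitian) (y : n → ℝ) :
    (y ⬝ᵥ (A ^ 2) *ᵥ y) ^ 3 ≤ (y ⬝ᵥ CFC.abs A *ᵥ y) ^ 2 * (y ⬝ᵥ (A ^ 4) *ᵥ y) := by
  have hAt : Aᵀ = A := by simpa using hA.eq
  have hB : (CFC.abs A).PosSemidef := (CFC.abs_nonneg A).posSemidef
  have hBB : (CFC.abs A)ᵀ * CFC.abs A = Aᵀ * A := by
    rw [show (CFC.abs A)ᵀ = CFC.abs A by simpa using hB.isHermitian.eq, CFC.abs_mul_abs,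
      star_eq_conjTranspose, conjTranspose_eq_transpose_of_trivial]
  set x := A *ᵥ y
  have hyAx : y ⬝ᵥ A *ᵥ x = y ⬝ᵥ (A ^ 2) *ᵥ y := by rw [mulVec_mulVec, sq]
  have hxx : x ⬝ᵥ x = y ⬝ᵥ (A ^ 2) *ᵥ y := by rw [mulVec_dotProduct_mulVec_self, hAt, sq]
  have hBx : CFC.abs A *ᵥ x ⬝ᵥ CFC.abs A *ᵥ x = y ⬝ᵥ (A ^ 4) *ᵥ y := by
    rw [mulVec_dotProduct_mulVec_self, hBB, ← mulVec_dotProduct_mulVec_self, mulVec_mulVec,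
      mulVec_dotProduct_mulVec_self, transpose_mul, hAt]
    simp only [pow_succ, pow_zero, one_mul, mul_assoc]
  have hself_nonneg (v : n → ℝ) : 0 ≤ v ⬝ᵥ v := sum_nonneg fun k _ => mul_self_nonneg (v k)
  refine pow_three_le_sq_mul_of_sq_le_mul (s := x ⬝ᵥ CFC.abs A *ᵥ x)
    ((hself_nonneg x).trans_eq hxx) ((hself_nonneg _).trans_eq hBx) ?_ ?_
  · rw [← hyAx]
    exact sq_dotProduct_mulVec_le_of_posSemidef_add_sub hAt hA.posSemidef_cfcAbs_add
      hA.posSemidef_cfcAbs_sub y x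
  · rw [← hxx, ← hBx]
    exact sq_dotProduct_le x _

end Matrix

namespace SimpleGraph

variable {V : Type*} [Fintype V] (G : SimpleGraph V) [DecidableRel G.Adj]

theorem sum_adjMatrix_apply_left (u : V) : ∑ l, G.adjMatrix ℝ l u = G.degree u := by
  simp [adjMatrix_apply, sum_boole, ← card_neighborFinset_eq_degree, neighborFinset_eq_filter,
    adj_comm]

variable [DecidableEq V]

theorem adjMatrix_sq_apply_le (l i : V) : (G.adjMatrix ℝ ^ 2) l i ≤ G.degree i := by
  rw [sq, mul_adjMatrix_apply, ← card_neighborFinset_eq_degree, card_eq_sum_ones, Nat.cast_sum]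
  gcongr with u
  by_cases h : G.Adj l u <;> simp [h]

theorem sum_adjMatrix_sq_apply_le (i : V) :
    ∑ l, (G.adjMatrix ℝ ^ 2) l i ≤ G.degree i * G.maxDegree := by
  calc ∑ l, (G.adjMatrix ℝ ^ 2) l i = ∑ l, ∑ u ∈ G.neighborFinset i, G.adjMatrix ℝ l u := by
        simp only [sq, mul_adjMatrix_apply]
    _ = ∑ u ∈ G.neighborFinset i, (G.degree u : ℝ) := by
        exact sum_comm.trans (sum_congr rfl fun u _ => G.sum_adjMatrix_apply_left u)
    _ ≤ ∑ u ∈ G.neighborFinset i, (G.maxDegree : ℝ) := by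
        gcongr with u; exact_mod_cast G.degree_le_maxDegree u
    _ = G.degree i * G.maxDegree := by
        rw [sum_const, card_neighborFinset_eq_degree, nsmul_eq_mul]

theorem adjMatrix_pow_four_apply_self_le (i : V) :
    (G.adjMatrix ℝ ^ 4) i i ≤ G.degree i ^ 2 * G.maxDegree := by
  have hsymm := (G.isSymm_adjMatrix (α := ℝ)).pow 2
  calc (G.adjMatrix ℝ ^ 4) i i = ∑ l, (G.adjMatrix ℝ ^ 2) l i * (G.adjMatrix ℝ ^ 2) l i := by
        rw [show 4 = 2 + 2 from rfl, pow_add, mul_apply]; simp only [hsymm.apply]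
    _ ≤ ∑ l, (G.degree i : ℝ) * (G.adjMatrix ℝ ^ 2) l i := by
        gcongr with l
        · rw [adjMatrix_pow_apply_eq_card_walk]; positivity
        · exact G.adjMatrix_sq_apply_le l i
    _ ≤ G.degree i ^ 2 * G.maxDegree := by
        rw [← mul_sum, pow_two (G.degree i : ℝ), mul_assoc]
        gcongr
        exact G.sum_adjMatrix_sq_apply_le i

theorem degree_le_sq_cfcAbs_adjMatrix_apply_mul_maxDegree (i : V) :
    (G.degree i : ℝ) ≤ CFC.abs (G.adjMatrix ℝ) i i ^ 2 * G.maxDegree := by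
  set d : ℝ := (G.degree i : ℝ)
  set b := CFC.abs (G.adjMatrix ℝ) i i
  have hcube : d ^ 3 ≤ b ^ 2 * (d ^ 2 * G.maxDegree) := by
    have h := (G.isHermitian_adjMatrix ℝ).dotProduct_sq_mulVec_pow_three_le (Pi.single i 1)
    simp only [single_one_dotProduct, mulVec_single_one, col_apply] at h
    rw [sq, G.adjMatrix_mul_self_apply_self] at h
    exact h.trans (by gcongr; exact G.adjMatrix_pow_four_apply_self_le i)
  rcases (show (0 : ℝ) ≤ d from Nat.cast_nonneg _).eq_or_lt with hd | hd
  · rw [← hd]; positivity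
  · nlinarith [pow_pos hd 2]

end SimpleGraph

theorem vertexEnergy_eq_cfcAbs {n : ℕ} (G : SimpleGraph (Fin n)) [DecidableRel G.Adj]
    (i : Fin n) : vertexEnergy G i = CFC.abs (G.adjMatrix ℝ) i i := by
  rw [vertexEnergy,
    (posSemidef_self_mul_conjTranspose _).eigenvectorUnitary_mul_diagonal_sqrt_mul_star, CFC.abs,
    star_eq_conjTranspose, (G.isHermitian_adjMatrix ℝ).eq]

theorem stmt_6_general {n : ℕ} (G : SimpleGraph (Fin n)) [DecidableRel G.Adj]
    (i : Fin n) :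
    Real.sqrt ((G.degree i : ℝ) / (G.maxDegree : ℝ)) ≤ vertexEnergy G i := by
  have hE : 0 ≤ vertexEnergy G i :=
    vertexEnergy_eq_cfcAbs G i ▸ (CFC.abs_nonneg _).posSemidef.diag_nonneg
  rw [Real.sqrt_le_left hE, vertexEnergy_eq_cfcAbs]
  exact div_le_of_le_mul₀ (Nat.cast_nonneg _) (sq_nonneg _)
    (G.degree_le_sq_cfcAbs_adjMatrix_apply_mul_maxDegree i)

theorem stmt_6 {n : ℕ} (G : SimpleGraph (Fin n)) [DecidableRel G.Adj]
    (hedge : G.edgeSet.Nonempty) (i : Fin n) :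
    Real.sqrt ((G.degree i : ℝ) / (G.maxDegree : ℝ)) ≤ vertexEnergy G i :=
  stmt_6_general G i
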